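/- In a Reedy category (C, C₋, C₊), every idempotent splits in a canonical way: if α : c → c is a morphism with α ∘ α = α, then there exists a unique pair of a morphism σ of C₋ and a morphism δ of C₊ such that δ ∘ σ = α and σ ∘ δ = id. -/

import Mathlib

/-!
Factor `α = σ ≫ δ` with `σ ∈ C₋`, `δ ∈ C₊` through `d`, and factor `δ ≫ σ = σ' ≫ δ'` through `e`.
Then `(σ ≫ σ') ≫ (δ' ≫ δ) = α ≫ α = α` is a second Reedy factorization of `α`, so by uniqueness
`e = d`. Now `σ'` and `δ'` are endomorphisms of `d` lying in `C₋` and `C₊`; well-foundedness of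
the Reedy order makes every such endomorphism an identity, so `δ ≫ σ = 𝟙 d`.
-/

namespace ReedyPaper

open CategoryTheory

universe v₂ u₂ v₁ u₁ v u

variable {C : Type u} [Category.{v} C]

def IsIdMor {x y : C} (f : x ⟶ y) : Prop := ∃ h : x = y, f = eqToHom h

structure ReedyStruct (C : Type u) [Category.{v} C] where
  neg : MorphismProperty C
  pos : MorphismProperty C
  neg_id : ∀ x : C, neg (𝟙 x)
  pos_id : ∀ x : C, pos (𝟙 x)
  neg_comp : ∀ {x y z : C} (f : x ⟶ y) (g : y ⟶ z), neg f → neg g → neg (f ≫ g)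
  pos_comp : ∀ {x y z : C} (f : x ⟶ y) (g : y ⟶ z), pos f → pos g → pos (f ≫ g)
  factor_existsUnique : ∀ {x y : C} (f : x ⟶ y),
    ∃! t : Σ z : C, (x ⟶ z) × (z ⟶ y), neg t.2.1 ∧ pos t.2.2 ∧ t.2.1 ≫ t.2.2 = f
  wf : WellFounded (fun x y : C =>
    (∃ f : x ⟶ y, pos f ∧ ¬ IsIdMor f) ∨ (∃ f : y ⟶ x, neg f ∧ ¬ IsIdMor f))

structure ChainObj (C : Type u) [Category.{v} C] where
  n : ℕ
  X : Fin (n + 1) ⥤ C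

structure ChainHom (P Q : ChainObj C) where
  α : Fin (P.n + 1) →o Fin (Q.n + 1)
  θ : ∀ i : Fin (P.n + 1), P.X.obj i ⟶ Q.X.obj (α i)
  natural : ∀ {i j : Fin (P.n + 1)} (h : i ≤ j),
    P.X.map (homOfLE h) ≫ θ j = θ i ≫ Q.X.map (homOfLE (α.monotone h))

theorem ChainHom.ext' {P Q : ChainObj C} {f g : ChainHom P Q}
    (hα : f.α = g.α) (hθ : HEq f.θ g.θ) : f = g := by
  cases f; cases g; cases hα; cases hθ; rfl

def ChainHom.id (P : ChainObj C) : ChainHom P P where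
  α := OrderHom.id
  θ i := 𝟙 _
  natural h := (Category.comp_id _).trans (Category.id_comp _).symm

def ChainHom.comp {P Q S : ChainObj C} (f : ChainHom P Q) (g : ChainHom Q S) :
    ChainHom P S where
  α := g.α.comp f.α
  θ i := f.θ i ≫ g.θ (f.α i)
  natural {i j} h := by
    show P.X.map (homOfLE h) ≫ f.θ j ≫ g.θ (f.α j) =
      (f.θ i ≫ g.θ (f.α i)) ≫ S.X.map (homOfLE (g.α.monotone (f.α.monotone h)))
    rw [← Category.assoc, f.natural h, Category.assoc, g.natural (f.α.monotone h),
      ← Category.assoc]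
    all_goals rfl

instance : Category (ChainObj C) where
  Hom := ChainHom
  id := ChainHom.id
  comp := ChainHom.comp
  id_comp f := ChainHom.ext' rfl (heq_of_eq (funext fun i => Category.id_comp _))
  comp_id f := ChainHom.ext' rfl (heq_of_eq (funext fun i => Category.comp_id _))
  assoc f g h := ChainHom.ext' rfl (heq_of_eq (funext fun i => Category.assoc _ _ _))

/-- The partial order on the hom-sets of `∫N(C)` (and of `∫N^{-,+}(C)`):
`(α, θ) ≤ (α', θ')` iff `α ≤ α'` pointwise and `θ'ᵢ = Y(α(i) ≤ α'(i)) ∘ θᵢ` for all `i`. -/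
def ChainHom.le {P Q : ChainObj C} (f g : ChainHom P Q) : Prop :=
  (∀ i, f.α i ≤ g.α i) ∧
    ∀ (i : Fin (P.n + 1)) (h : f.α i ≤ g.α i), g.θ i = f.θ i ≫ Q.X.map (homOfLE h)

theorem ChainHom.le_comp_right {P Q S : ChainObj C} {f f' : P ⟶ Q} (g : Q ⟶ S)
    (h : ChainHom.le f f') : ChainHom.le (f ≫ g) (f' ≫ g) := by
  refine ⟨fun i => g.α.monotone (h.1 i), fun i hi => ?_⟩
  show f'.θ i ≫ g.θ (f'.α i) = (f.θ i ≫ g.θ (f.α i)) ≫ S.X.map (homOfLE hi)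
  rw [h.2 i (h.1 i), Category.assoc, g.natural (h.1 i), ← Category.assoc]
  all_goals rfl

theorem ChainHom.le_comp_left {P Q S : ChainObj C} (f : P ⟶ Q) {g g' : Q ⟶ S}
    (h : ChainHom.le g g') : ChainHom.le (f ≫ g) (f ≫ g') := by
  refine ⟨fun i => h.1 (f.α i), fun i hi => ?_⟩
  show f.θ i ≫ g'.θ (f.α i) = (f.θ i ≫ g.θ (f.α i)) ≫ S.X.map (homOfLE hi)
  rw [h.2 (f.α i) (h.1 (f.α i)), ← Category.assoc]
  all_goals rfl

/-- Objects of `∫N^{-,+}(C)`: chains all of whose morphisms lie in `C₋`. -/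
structure NegObj (R : ReedyStruct C) where
  n : ℕ
  X : Fin (n + 1) ⥤ C
  negMap : ∀ {i j : Fin (n + 1)} (h : i ≤ j), R.neg (X.map (homOfLE h))

variable {R : ReedyStruct C}

/-- The underlying object of `∫N(C)`. -/
def NegObj.chain (P : NegObj R) : ChainObj C := ⟨P.n, P.X⟩

/-- Morphisms of `∫N^{-,+}(C)`: morphisms of `∫N(C)` all of whose components lie in `C₊`. -/
def NegHomT (P Q : NegObj R) : Type v :=
  { f : P.chain ⟶ Q.chain // ∀ i, R.pos (f.θ i) }

def NegHomT.id (P : NegObj R) : NegHomT P P := ⟨𝟙 P.chain, fun _ => R.pos_id _⟩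

def NegHomT.comp {P Q S : NegObj R} (f : NegHomT P Q) (g : NegHomT Q S) : NegHomT P S :=
  ⟨f.1 ≫ g.1, fun i => by
    show R.pos (f.1.θ i ≫ g.1.θ (f.1.α i))
    exact R.pos_comp _ _ (f.2 i) (g.2 _)⟩

theorem NegHomT.id_comp {P Q : NegObj R} (f : NegHomT P Q) : (NegHomT.id P).comp f = f := by
  apply Subtype.ext
  show 𝟙 P.chain ≫ f.1 = f.1
  exact Category.id_comp f.1

theorem NegHomT.comp_id {P Q : NegObj R} (f : NegHomT P Q) : f.comp (NegHomT.id Q) = f := by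
  apply Subtype.ext
  show f.1 ≫ 𝟙 Q.chain = f.1
  exact Category.comp_id f.1

theorem NegHomT.comp_assoc {P Q S T : NegObj R} (f : NegHomT P Q) (g : NegHomT Q S)
    (h : NegHomT S T) : (f.comp g).comp h = f.comp (g.comp h) := by
  apply Subtype.ext
  show (f.1 ≫ g.1) ≫ h.1 = f.1 ≫ (g.1 ≫ h.1)
  exact Category.assoc f.1 g.1 h.1

/-- The category `∫N^{-,+}(C)`. -/
instance : Category (NegObj R) where
  Hom := NegHomT
  id := NegHomT.id
  comp := NegHomT.comp
  id_comp := NegHomT.id_comp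
  comp_id := NegHomT.comp_id
  assoc := NegHomT.comp_assoc

/-- The order on the hom-sets of `∫N^{-,+}(C)`. -/
def NegHom.le {P Q : NegObj R} (f g : P ⟶ Q) : Prop := ChainHom.le f.1 g.1

/-- The equivalence relation `∼` on the hom-sets of `∫N^{-,+}(C)`: the
symmetric-transitive closure of `≤`. -/
def NegHom.equiv {P Q : NegObj R} (f g : P ⟶ Q) : Prop :=
  Relation.EqvGen (fun a b : P ⟶ Q => NegHom.le a b) f g

theorem NegHom.le_comp_right {P Q S : NegObj R} {f f' : P ⟶ Q} (g : Q ⟶ S)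
    (h : NegHom.le f f') : NegHom.le (f ≫ g) (f' ≫ g) :=
  ChainHom.le_comp_right g.1 h

theorem NegHom.le_comp_left {P Q S : NegObj R} (f : P ⟶ Q) {g g' : Q ⟶ S}
    (h : NegHom.le g g') : NegHom.le (f ≫ g) (f ≫ g') :=
  ChainHom.le_comp_left f.1 h

/-- Identity-reflectingness of a chain. -/
def NegObj.IdRefl (P : NegObj R) : Prop :=
  ∀ {i j : Fin (P.n + 1)} (h : i ≤ j), IsIdMor (P.X.map (homOfLE h)) → i = j

/-- Objects of `∫N^{--,+}_+(C)`: identity-reflecting chains in `C₋`. -/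
structure StrictObj (R : ReedyStruct C) where
  toNegObj : NegObj R
  idRefl : toNegObj.IdRefl

/-- Morphisms of `∫N^{--,+}_+(C)`: morphisms of `∫N^{-,+}(C)` with `α` injective. -/
def StrictHomT (P Q : StrictObj R) : Type v :=
  { f : P.toNegObj ⟶ Q.toNegObj // Function.Injective f.1.α }

def StrictHomT.id (P : StrictObj R) : StrictHomT P P :=
  ⟨𝟙 P.toNegObj, fun _ _ h => h⟩

def StrictHomT.comp {P Q S : StrictObj R} (f : StrictHomT P Q) (g : StrictHomT Q S) :
    StrictHomT P S :=
  ⟨f.1 ≫ g.1, fun _ _ h => f.2 (g.2 h)⟩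

/-- The category `∫N^{--,+}_+(C)`. -/
instance : Category (StrictObj R) where
  Hom := StrictHomT
  id := StrictHomT.id
  comp := StrictHomT.comp
  id_comp f := Subtype.ext (Category.id_comp f.1)
  comp_id f := Subtype.ext (Category.comp_id f.1)
  assoc f g h := Subtype.ext (Category.assoc f.1 g.1 h.1)

/-- The order on the hom-sets of `∫N^{--,+}_+(C)`. -/
def StrictHom.le {P Q : StrictObj R} (f g : P ⟶ Q) : Prop := NegHom.le f.1 g.1

/-- The equivalence relation `∼` on the hom-sets of `∫N^{--,+}_+(C)`. -/
def StrictHom.equiv {P Q : StrictObj R} (f g : P ⟶ Q) : Prop :=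
  Relation.EqvGen (fun a b : P ⟶ Q => StrictHom.le a b) f g

theorem StrictHom.le_comp_right {P Q S : StrictObj R} {f f' : P ⟶ Q} (g : Q ⟶ S)
    (h : StrictHom.le f f') : StrictHom.le (f ≫ g) (f' ≫ g) :=
  NegHom.le_comp_right g.1 h

theorem StrictHom.le_comp_left {P Q S : StrictObj R} (f : P ⟶ Q) {g g' : Q ⟶ S}
    (h : StrictHom.le g g') : StrictHom.le (f ≫ g) (f ≫ g') :=
  NegHom.le_comp_left f.1 h

/-- Objects of `Down_*(C)`: the same as those of `∫N^{-,+}(C)`. -/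
structure DownStar (R : ReedyStruct C) where
  obj : NegObj R

/-- The category `Down_*(C)`: hom-sets are the quotients of those of `∫N^{-,+}(C)`
by the symmetric-transitive closure of `≤`. -/
instance : Category (DownStar R) where
  Hom P Q := Quot (fun f g : P.obj ⟶ Q.obj => NegHom.le f g)
  id P := Quot.mk _ (𝟙 P.obj)
  comp {P Q S} f g :=
    Quot.lift
      (fun f' => Quot.lift (fun g' => Quot.mk _ (f' ≫ g'))
        (fun _ _ hg => Quot.sound (NegHom.le_comp_left f' hg)) g)
      (fun f₁ f₂ hf => Quot.inductionOn g (fun g' =>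
        Quot.sound (NegHom.le_comp_right g' hf))) f
  id_comp f := Quot.inductionOn f fun f' => congrArg (Quot.mk _) (Category.id_comp f')
  comp_id f := Quot.inductionOn f fun f' => congrArg (Quot.mk _) (Category.comp_id f')
  assoc f g h :=
    Quot.inductionOn f fun f' => Quot.inductionOn g fun g' => Quot.inductionOn h fun h' =>
      congrArg (Quot.mk _) (Category.assoc f' g' h')

/-- Objects of `Down(C)`: the same as those of `∫N^{--,+}_+(C)`. -/
structure Down (R : ReedyStruct C) where
  obj : StrictObj R

/-- The category `Down(C)`: hom-sets are the quotients of those of `∫N^{--,+}_+(C)`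
by the symmetric-transitive closure of `≤`. -/
instance : Category (Down R) where
  Hom P Q := Quot (fun f g : P.obj ⟶ Q.obj => StrictHom.le f g)
  id P := Quot.mk _ (𝟙 P.obj)
  comp {P Q S} f g :=
    Quot.lift
      (fun f' => Quot.lift (fun g' => Quot.mk _ (f' ≫ g'))
        (fun _ _ hg => Quot.sound (StrictHom.le_comp_left f' hg)) g)
      (fun f₁ f₂ hf => Quot.inductionOn g (fun g' =>
        Quot.sound (StrictHom.le_comp_right g' hf))) f
  id_comp f := Quot.inductionOn f fun f' => congrArg (Quot.mk _) (Category.id_comp f')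
  comp_id f := Quot.inductionOn f fun f' => congrArg (Quot.mk _) (Category.comp_id f')
  assoc f g h :=
    Quot.inductionOn f fun f' => Quot.inductionOn g fun g' => Quot.inductionOn h fun h' =>
      congrArg (Quot.mk _) (Category.assoc f' g' h')

/-- The quotient functor `∫N^{-,+}(C) → Down_*(C)`. -/
def qStar (R : ReedyStruct C) : NegObj R ⥤ DownStar R where
  obj P := ⟨P⟩
  map f := Quot.mk _ f
  map_id _ := rfl
  map_comp _ _ := rfl

/-- The inclusion functor `Down(C) → Down_*(C)`. -/
def downInclusion (R : ReedyStruct C) : Down R ⥤ DownStar R where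
  obj P := ⟨P.obj.toNegObj⟩
  map {P Q} f :=
    Quot.lift (fun f' : P.obj ⟶ Q.obj => Quot.mk _ f'.1) (fun _ _ h => Quot.sound h) f
  map_id _ := rfl
  map_comp {P Q S} f g := by
    induction f using Quot.ind
    induction g using Quot.ind
    rfl

/-- The last-component functor `∫N(C) → C`. -/
def lastChain : ChainObj C ⥤ C where
  obj P := P.X.obj (Fin.last P.n)
  map {P Q} f := f.θ (Fin.last P.n) ≫ Q.X.map (homOfLE (Fin.le_last (f.α (Fin.last P.n))))
  map_id P := by
    show 𝟙 (P.X.obj (Fin.last P.n)) ≫ P.X.map (homOfLE (Fin.le_last (Fin.last P.n))) = 𝟙 _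
    rw [Category.id_comp]
    exact P.X.map_id _
  map_comp {P Q S} f g := by
    show (f.θ (Fin.last P.n) ≫ g.θ (f.α (Fin.last P.n))) ≫
        S.X.map (homOfLE (Fin.le_last (g.α (f.α (Fin.last P.n))))) =
      (f.θ (Fin.last P.n) ≫ Q.X.map (homOfLE (Fin.le_last (f.α (Fin.last P.n))))) ≫
        g.θ (Fin.last Q.n) ≫ S.X.map (homOfLE (Fin.le_last (g.α (Fin.last Q.n))))
    rw [Category.assoc, Category.assoc, ← Category.assoc (Q.X.map _),
      g.natural (Fin.le_last (f.α (Fin.last P.n))), Category.assoc, ← Functor.map_comp,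
      homOfLE_comp]

theorem lastChain_eq_of_le {P Q : ChainObj C} {f g : P ⟶ Q} (h : ChainHom.le f g) :
    lastChain.map f = lastChain.map g := by
  show f.θ (Fin.last P.n) ≫ Q.X.map (homOfLE (Fin.le_last (f.α (Fin.last P.n)))) =
    g.θ (Fin.last P.n) ≫ Q.X.map (homOfLE (Fin.le_last (g.α (Fin.last P.n))))
  rw [h.2 (Fin.last P.n) (h.1 (Fin.last P.n)), Category.assoc, ← Functor.map_comp,
    homOfLE_comp]

/-- The forgetful functor `∫N^{-,+}(C) → ∫N(C)`. -/
def negForget (R : ReedyStruct C) : NegObj R ⥤ ChainObj C where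
  obj P := P.chain
  map f := f.1
  map_id _ := rfl
  map_comp _ _ := rfl

/-- The last-component functor `∫N^{-,+}(C) → C`. -/
def lastNeg (R : ReedyStruct C) : NegObj R ⥤ C := negForget R ⋙ lastChain

/-- The forgetful functor `∫N^{--,+}_+(C) → ∫N^{-,+}(C)`. -/
def strictForget (R : ReedyStruct C) : StrictObj R ⥤ NegObj R where
  obj P := P.toNegObj
  map f := f.1
  map_id _ := rfl
  map_comp _ _ := rfl

/-- The last-component functor `∫N^{--,+}_+(C) → C`. -/
def lastStrict (R : ReedyStruct C) : StrictObj R ⥤ C := strictForget R ⋙ lastNeg R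

/-- The last-component functor `Down_*(C) → C`. -/
def lastDownStar (R : ReedyStruct C) : DownStar R ⥤ C where
  obj P := (lastNeg R).obj P.obj
  map {P Q} f :=
    Quot.lift (fun f' : P.obj ⟶ Q.obj => (lastNeg R).map f')
      (fun _ _ h => lastChain_eq_of_le h) f
  map_id P := (lastNeg R).map_id P.obj
  map_comp {P Q S} f g := by
    induction f using Quot.ind
    induction g using Quot.ind
    exact (lastNeg R).map_comp _ _

/-- The last-component functor `Down(C) → C`. -/
def lastDown (R : ReedyStruct C) : Down R ⥤ C where
  obj P := (lastStrict R).obj P.obj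
  map {P Q} f :=
    Quot.lift (fun f' : P.obj ⟶ Q.obj => (lastStrict R).map f')
      (fun _ _ h => lastChain_eq_of_le h) f
  map_id P := (lastStrict R).map_id P.obj
  map_comp {P Q S} f g := by
    induction f using Quot.ind
    induction g using Quot.ind
    exact (lastStrict R).map_comp _ _

/-- The wide subcategory `Γ₋` of `∫N^{-,+}(C)`: morphisms of the form
`(σ, id) : ([m], X ∘ σ) → ([n], X)` with `σ` surjective, i.e. morphisms whose simplicial
component is surjective and all of whose components are identities. -/
def GammaNeg (R : ReedyStruct C) {P Q : NegObj R} (f : P ⟶ Q) : Prop :=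
  Function.Surjective f.1.α ∧ ∀ i, IsIdMor (f.1.θ i)

/-- The wide subcategory `Γ₊` of `∫N^{-,+}(C)`: morphisms `(δ, θ)` with `δ` injective. -/
def GammaPos (R : ReedyStruct C) {P Q : NegObj R} (f : P ⟶ Q) : Prop :=
  Function.Injective f.1.α

/-- Whiskering (precomposition) with `lastF` is bijective on natural transformations
between functors out of `C`. -/
def WhiskerUnique {Γ : Type u₁} [Category.{v₁} Γ] (lastF : Γ ⥤ C) : Prop :=
  ∀ {D : Type u₂} [Category.{v₂} D] (F G : C ⥤ D)
    (ε : lastF ⋙ F ⟶ lastF ⋙ G), ∃! ε' : F ⟶ G, Functor.whiskerLeft lastF ε' = ε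

/-- `lastF : Γ ⥤ C` is a weak 1-localization of `Γ` at the `last`-weak equivalences
(the morphisms sent by `lastF` to identities). -/
def IsWeakLocalizationAtLastWeq {Γ : Type u₁} [Category.{v₁} Γ] (lastF : Γ ⥤ C) : Prop :=
  (∀ {P Q : Γ} (f : P ⟶ Q), IsIdMor (lastF.map f) → IsIso (lastF.map f)) ∧
  (∀ {E : Type u₂} [Category.{v₂} E] (G : Γ ⥤ E),
    (∀ {P Q : Γ} (f : P ⟶ Q), IsIdMor (lastF.map f) → IsIso (G.map f)) →
    ∃ H : C ⥤ E, Nonempty (lastF ⋙ H ≅ G)) ∧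
  (∀ {E : Type u₂} [Category.{v₂} E] (H H' : C ⥤ E) (θ : lastF ⋙ H ≅ lastF ⋙ H'),
    ∃! θ' : H ≅ H', Functor.isoWhiskerLeft lastF θ' = θ)

theorem isIdMor_iff_eq_id {x : C} (f : x ⟶ x) : IsIdMor f ↔ f = 𝟙 x :=
  ⟨fun ⟨_, hf⟩ => hf, fun hf => ⟨rfl, hf⟩⟩

namespace ReedyStruct

variable (R)

theorem eq_id_of_pos {x : C} {f : x ⟶ x} (hf : R.pos f) : f = 𝟙 x := by
  by_contra hne
  rw [← isIdMor_iff_eq_id] at hne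
  exact R.wf.irrefl.irrefl x (Or.inl ⟨f, hf, hne⟩)

theorem eq_id_of_neg {x : C} {f : x ⟶ x} (hf : R.neg f) : f = 𝟙 x := by
  by_contra hne
  rw [← isIdMor_iff_eq_id] at hne
  exact R.wf.irrefl.irrefl x (Or.inr ⟨f, hf, hne⟩)

theorem factor_unique {x y z z' : C} {f : x ⟶ y} {g : x ⟶ z} {h : z ⟶ y} {g' : x ⟶ z'}
    {h' : z' ⟶ y} (hg : R.neg g) (hh : R.pos h) (hf : g ≫ h = f) (hg' : R.neg g')
    (hh' : R.pos h') (hf' : g' ≫ h' = f) :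
    (⟨z, g, h⟩ : Σ w : C, (x ⟶ w) × (w ⟶ y)) = ⟨z', g', h'⟩ :=
  (R.factor_existsUnique f).unique ⟨hg, hh, hf⟩ ⟨hg', hh', hf'⟩

theorem comp_eq_id_of_factor_idempotent {c d : C} {σ : c ⟶ d} {δ : d ⟶ c} (hσ : R.neg σ)
    (hδ : R.pos δ) (hidem : (σ ≫ δ) ≫ (σ ≫ δ) = σ ≫ δ) : δ ≫ σ = 𝟙 d := by
  obtain ⟨⟨e, σ', δ'⟩, ⟨hσ', hδ', hfac⟩, -⟩ := R.factor_existsUnique (δ ≫ σ)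
  have hrefac : (σ ≫ σ') ≫ (δ' ≫ δ) = σ ≫ δ :=
    calc (σ ≫ σ') ≫ (δ' ≫ δ) = σ ≫ (σ' ≫ δ') ≫ δ := by simp only [Category.assoc]
      _ = (σ ≫ δ) ≫ (σ ≫ δ) := by rw [hfac]; simp only [Category.assoc]
      _ = σ ≫ δ := hidem
  obtain rfl : e = d := congrArg Sigma.fst <|
    R.factor_unique (R.neg_comp _ _ hσ hσ') (R.pos_comp _ _ hδ' hδ) hrefac hσ hδ rfl
  rw [← hfac, R.eq_id_of_neg hσ', R.eq_id_of_pos hδ', Category.id_comp]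

end ReedyStruct

section Statements

variable (R : ReedyStruct C)

/-- in a Reedy category every idempotent splits canonically. -/
theorem statement0 {c : C} (a : c ⟶ c) (ha : a ≫ a = a) :
    ∃! t : Σ d : C, (c ⟶ d) × (d ⟶ c),
      R.neg t.2.1 ∧ R.pos t.2.2 ∧ t.2.1 ≫ t.2.2 = a ∧ t.2.2 ≫ t.2.1 = 𝟙 t.1 := by
  obtain ⟨⟨d, σ, δ⟩, ⟨hσ, hδ, rfl⟩, huniq⟩ := R.factor_existsUnique a
  refine ⟨⟨d, σ, δ⟩, ⟨hσ, hδ, rfl, R.comp_eq_id_of_factor_idempotent hσ hδ ha⟩, ?_⟩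
  rintro t ⟨hneg, hpos, hfac, -⟩
  exact huniq t ⟨hneg, hpos, hfac⟩

end Statements

end ReedyPaper
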